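/- Let 1/2 < α < 1 and c > 0, and let N : ℕ → ℕ satisfy N(d) > d for all d and N(d) - 2d ≥ c·d^α for all sufficiently large d. Then P_{d,N(d)} → 0 as d → ∞. -/

import Mathlib

/-! The Wendel probability is the lower binomial tail `P(Bin(N - 1, 1/2) ≤ d - 1)`, so the
exponential-moment (Hoeffding) bound `Σ_{i<d} C(n,i) e^{u(n-2i)} ≤ (2 cosh u)^n ≤ 2^n e^{n u²/2}`
gives `P_{d,N} ≤ exp(-(N - 2d)² / 2N)` whenever `2d ≤ N`. Writing `N = 2d + t`, the exponent
`t² / 2(2d + t)` is increasing in `t`, and for `t ≥ c d^α` with `d^α ≤ d` it is at least a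
multiple of `d^(2α-1)`, which tends to infinity because `α > 1/2`. -/

open Filter Finset Real Topology

/-- The Wendel probability `P_{d,N} = 2^{1-N} · Σ_{i=0}^{d-1} C(N-1, i)`. -/
noncomputable def wendelP (d N : ℕ) : ℝ :=
  (∑ i ∈ Finset.range d, ((N - 1).choose i : ℝ)) / 2 ^ (N - 1)

theorem sum_range_choose_mul_exp (n : ℕ) (u : ℝ) :
    ∑ i ∈ range (n + 1), (n.choose i : ℝ) * exp (u * (n - 2 * i)) = (2 * cosh u) ^ n := by
  rw [cosh_eq, mul_div_cancel₀ _ two_ne_zero, add_comm (exp u), add_pow]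
  refine sum_congr rfl fun i hi => ?_
  rw [← exp_nat_mul, ← exp_nat_mul, Nat.cast_sub (Nat.lt_succ_iff.mp (mem_range.mp hi)),
    mul_comm, ← exp_add]
  ring_nf

theorem sum_range_choose_le_cosh_pow_mul_exp {n d : ℕ} (hd : d ≤ n + 1) {u : ℝ} (hu : 0 ≤ u) :
    ∑ i ∈ range d, (n.choose i : ℝ) ≤ (2 * cosh u) ^ n * exp (-(u * (n - 2 * d + 2))) := by
  rw [← sum_range_choose_mul_exp, sum_mul]
  calc ∑ i ∈ range d, (n.choose i : ℝ)
      ≤ ∑ i ∈ range d, (n.choose i : ℝ) * exp (u * (n - 2 * i)) * exp (-(u * (n - 2 * d + 2))) := by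
        refine sum_le_sum fun i hi => ?_
        have hid : (i : ℝ) + 1 ≤ d := by exact_mod_cast mem_range.mp hi
        rw [mul_assoc, ← exp_add]
        refine le_mul_of_one_le_right (Nat.cast_nonneg _) (one_le_exp ?_)
        nlinarith
    _ ≤ _ := sum_le_sum_of_subset_of_nonneg (range_subset_range.mpr hd)
        fun _ _ _ => by positivity

theorem wendelP_le_exp {d N : ℕ} (hdN : d ≤ N) (hN : 0 < N) {u : ℝ} (hu : 0 ≤ u) :
    wendelP d N ≤ exp (N * u ^ 2 / 2 - u * (N - 2 * d)) := by
  have hn : ((N - 1 : ℕ) : ℝ) = N - 1 := by rw [Nat.cast_sub hN]; norm_num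
  rw [wendelP, div_le_iff₀ (by positivity)]
  calc ∑ i ∈ range d, ((N - 1).choose i : ℝ)
      ≤ (2 * cosh u) ^ (N - 1) * exp (-(u * ((N - 1 : ℕ) - 2 * d + 2))) :=
        sum_range_choose_le_cosh_pow_mul_exp (by omega) hu
    _ ≤ (2 * exp (u ^ 2 / 2)) ^ (N - 1) * exp (-(u * ((N - 1 : ℕ) - 2 * d + 2))) := by
        gcongr
        exact cosh_le_exp_half_sq u
    _ = exp ((N - 1 : ℕ) * (u ^ 2 / 2) - u * ((N - 1 : ℕ) - 2 * d + 2)) * 2 ^ (N - 1) := by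
        rw [mul_pow, ← exp_nat_mul, sub_eq_add_neg (((N - 1 : ℕ) : ℝ) * (u ^ 2 / 2)), exp_add]
        ring
    _ ≤ exp (N * u ^ 2 / 2 - u * (N - 2 * d)) * 2 ^ (N - 1) := by
        rw [mul_le_mul_iff_left₀ (by positivity), exp_le_exp, hn]
        nlinarith [sq_nonneg u]

theorem wendelP_le_exp_neg_sq_div {d N : ℕ} (h2d : 2 * d ≤ N) (hN : 0 < N) :
    wendelP d N ≤ exp (-(((N : ℝ) - 2 * d) ^ 2 / (2 * N))) := by
  have hNR : (0 : ℝ) < N := by exact_mod_cast hN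
  have ht : (0 : ℝ) ≤ N - 2 * d := by
    rw [sub_nonneg]; exact_mod_cast h2d
  refine (wendelP_le_exp (by omega) hN (div_nonneg ht hNR.le)).trans_eq (congrArg exp ?_)
  field_simp
  ring

theorem sq_div_add_le_sq_div_add {a t b : ℝ} (ha : 0 ≤ a) (hat : a ≤ t) (hb : 0 < b) :
    a ^ 2 / (b + a) ≤ t ^ 2 / (b + t) := by
  rw [div_le_div_iff₀ (by linarith) (by linarith)]
  nlinarith [mul_nonneg (mul_nonneg ha (ha.trans hat)) (sub_nonneg.mpr hat),
    mul_le_mul hat hat ha (ha.trans hat)]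

theorem mul_rpow_two_mul_sub_one_le_sq_div {α c x t : ℝ} (hα : α ≤ 1) (hc : 0 < c) (hx : 1 ≤ x)
    (ht : c * x ^ α ≤ t) :
    c ^ 2 / (2 + c) * x ^ (2 * α - 1) ≤ t ^ 2 / (2 * x + t) := by
  have hx0 : 0 < x := by linarith
  have hxα : x ^ α ≤ x := by
    simpa using rpow_le_rpow_of_exponent_le hx hα
  calc c ^ 2 / (2 + c) * x ^ (2 * α - 1) = (c * x ^ α) ^ 2 / ((2 + c) * x) := by
        rw [rpow_sub_one hx0.ne', mul_comm 2 α, rpow_mul hx0.le, rpow_two]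
        field_simp
    _ ≤ (c * x ^ α) ^ 2 / (2 * x + c * x ^ α) := by
        gcongr
        linarith [mul_le_mul_of_nonneg_left hxα hc.le]
    _ ≤ t ^ 2 / (2 * x + t) := sq_div_add_le_sq_div_add (by positivity) ht (by linarith)

theorem wendel_tendsto_zero_supercritical_general (α c : ℝ) (hα1 : 1 / 2 < α) (hα2 : α < 1)
    (hc : 0 < c) (N : ℕ → ℕ)
    (h1 : ∀ᶠ d : ℕ in atTop, c * (d : ℝ) ^ α ≤ (N d : ℝ) - 2 * d) :
    Tendsto (fun d : ℕ => wendelP d (N d)) atTop (𝓝 0) := by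
  set K := c ^ 2 / (2 + c) / 2
  have hK : Tendsto (fun d : ℕ => K * (d : ℝ) ^ (2 * α - 1)) atTop atTop :=
    ((tendsto_rpow_atTop (by linarith)).comp tendsto_natCast_atTop_atTop).const_mul_atTop
      (by positivity)
  refine squeeze_zero' (Eventually.of_forall fun d => by unfold wendelP; positivity) ?_
    (tendsto_exp_atBot.comp (tendsto_neg_atTop_atBot.comp hK))
  filter_upwards [h1, eventually_ge_atTop 1] with d hgap hd1
  have hd : (1 : ℝ) ≤ d := by exact_mod_cast hd1
  have h2d : 2 * d < N d := by
    have : (0 : ℝ) < c * (d : ℝ) ^ α := by positivity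
    exact_mod_cast (by linarith : (2 * d : ℝ) < N d)
  refine (wendelP_le_exp_neg_sq_div h2d.le (by omega)).trans (exp_le_exp.mpr (neg_le_neg ?_))
  calc K * (d : ℝ) ^ (2 * α - 1) = c ^ 2 / (2 + c) * (d : ℝ) ^ (2 * α - 1) / 2 := by ring
    _ ≤ ((N d : ℝ) - 2 * d) ^ 2 / (2 * d + (N d - 2 * d)) / 2 := by
        gcongr
        exact mul_rpow_two_mul_sub_one_le_sq_div hα2.le hc hd hgap
    _ = ((N d : ℝ) - 2 * d) ^ 2 / (2 * N d) := by ring_nf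

theorem wendel_tendsto_zero_supercritical (α c : ℝ) (hα1 : 1 / 2 < α) (hα2 : α < 1)
    (hc : 0 < c) (N : ℕ → ℕ) (hN : ∀ d, d < N d)
    (h1 : ∀ᶠ d : ℕ in atTop, c * (d : ℝ) ^ α ≤ (N d : ℝ) - 2 * d) :
    Tendsto (fun d : ℕ => wendelP d (N d)) atTop (𝓝 0) :=
  wendel_tendsto_zero_supercritical_general α c hα1 hα2 hc N h1
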